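/- (Corollary on sufficient conditions for zero loss.) Let N ≥ 1, let L be any one of the four Gray labelings GC1, GC2, GC3, GC4, and let B be a ZMod 2-submodule of (Fin N → ZMod 2 × ZMod 2) containing at least two elements. Suppose B contains codewords b'' and b''' such that (b'' k).1 = 1 for all k and (b''' k).2 = 1 for all k. Then the minimum of a^X(x_b, x_b̂) over pairs b ≠ b̂ in B equals the minimum of a^B(x_b, x_b̂) over such pairs; i.e., the asymptotic loss L(B) of the bit-wise decoder is zero. -/

import Mathlib

/-!
Always `a^B ≤ a^X`: since `w_c ≤ β`, `(β + 2 w_c)² ≤ (β + 8 w_c) β`. Conversely, under a Gray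
labeling the weight `b(i, j)` only depends on the difference of the labels of `i` and `j`, so the
pair `(b₀ + b - b̂, b₀)` of codewords has the same `β` as `(b, b̂)`. If no symbol of `x_{b₀}` is a
corner symbol `0` or `3`, that pair has `w_c = 0`, hence `a^X = √β ≤ a^B(b, b̂)`. Such a `b₀` is
`b'''` for GC1, `b''` for GC2 and the zero codeword for GC3 and GC4.
-/

open Finset

noncomputable section

/-- Pairwise weight of a pair of 4-PAM symbols: `1` if `|i−j| ∈ {1,3}`,
`4` if `|i−j| = 2`, `0` if `i = j`. -/
def pw (i j : Fin 4) : ℝ :=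
  if i = j then 0 else if ((i : ℤ) - (j : ℤ)).natAbs = 2 then 4 else 1

/-- Corner count: number of positions where the symbol pair is `(s₁,s₄)` or `(s₄,s₁)`. -/
def wc {N : ℕ} (x xh : Fin N → Fin 4) : ℕ :=
  (Finset.univ.filter fun k =>
    (x k, xh k) = ((0 : Fin 4), (3 : Fin 4)) ∨ (x k, xh k) = ((3 : Fin 4), (0 : Fin 4))).card

/-- Weighted error count `β(x, x̂)`. -/
def betaW {N : ℕ} (x xh : Fin N → Fin 4) : ℝ := ∑ k, pw (x k) (xh k)

/-- Normalized distance of the symbol-wise decoder: `a^X = √(β + 8 w_c)`. -/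
def aX {N : ℕ} (x xh : Fin N → Fin 4) : ℝ :=
  Real.sqrt (betaW x xh + 8 * wc x xh)

/-- Normalized distance of the bit-wise decoder: `a^B = (β + 2 w_c)/√β`. -/
def aB {N : ℕ} (x xh : Fin N → Fin 4) : ℝ :=
  (betaW x xh + 2 * wc x xh) / Real.sqrt (betaW x xh)

/-- The Gray labeling GC1 (binary reflected Gray code) for 4-PAM. -/
def GC1 : Fin 4 ≃ (ZMod 2 × ZMod 2) where
  toFun := ![(0, 0), (0, 1), (1, 1), (1, 0)]
  invFun := fun p => if p = (0, 0) then 0 else if p = (0, 1) then 1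
    else if p = (1, 1) then 2 else 3
  left_inv := by decide
  right_inv := by decide

/-- The Gray labeling GC2 for 4-PAM. -/
def GC2 : Fin 4 ≃ (ZMod 2 × ZMod 2) where
  toFun := ![(0, 0), (1, 0), (1, 1), (0, 1)]
  invFun := fun p => if p = (0, 0) then 0 else if p = (1, 0) then 1
    else if p = (1, 1) then 2 else 3
  left_inv := by decide
  right_inv := by decide

/-- The Gray labeling GC3 for 4-PAM. -/
def GC3 : Fin 4 ≃ (ZMod 2 × ZMod 2) where
  toFun := ![(0, 1), (0, 0), (1, 0), (1, 1)]
  invFun := fun p => if p = (0, 1) then 0 else if p = (0, 0) then 1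
    else if p = (1, 0) then 2 else 3
  left_inv := by decide
  right_inv := by decide

/-- The Gray labeling GC4 for 4-PAM. -/
def GC4 : Fin 4 ≃ (ZMod 2 × ZMod 2) where
  toFun := ![(1, 0), (0, 0), (0, 1), (1, 1)]
  invFun := fun p => if p = (1, 0) then 0 else if p = (0, 0) then 1
    else if p = (0, 1) then 2 else 3
  left_inv := by decide
  right_inv := by decide

/-- Symbol sequence corresponding to a binary codeword under labeling `L`. -/
def xb {N : ℕ} (L : Fin 4 ≃ (ZMod 2 × ZMod 2)) (b : Fin N → ZMod 2 × ZMod 2) :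
    Fin N → Fin 4 := fun k => L.symm (b k)

end

lemma pw_nonneg (i j : Fin 4) : 0 ≤ pw i j := by
  unfold pw; split_ifs <;> norm_num

lemma one_le_pw_of_ne {i j : Fin 4} (h : i ≠ j) : 1 ≤ pw i j := by
  unfold pw; rw [if_neg h]; split_ifs <;> norm_num

section Weights

variable {N : ℕ} (x xh : Fin N → Fin 4)

lemma betaW_nonneg : 0 ≤ betaW x xh :=
  sum_nonneg fun _ _ => pw_nonneg _ _

lemma betaW_pos_of_ne (h : x ≠ xh) : 0 < betaW x xh := by
  obtain ⟨k, hk⟩ := Function.ne_iff.mp h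
  exact sum_pos' (fun _ _ => pw_nonneg _ _) ⟨k, mem_univ k, by linarith [one_le_pw_of_ne hk]⟩

lemma wc_le_betaW : (wc x xh : ℝ) ≤ betaW x xh := by
  unfold wc betaW
  rw [card_eq_sum_ones, Nat.cast_sum, Nat.cast_one]
  calc ∑ k ∈ univ.filter _, (1 : ℝ) ≤ ∑ k ∈ univ.filter _, pw (x k) (xh k) := by
        refine sum_le_sum fun k hk => ?_
        rcases (mem_filter.mp hk).2 with h | h <;>
          obtain ⟨h₁, h₂⟩ := Prod.mk.inj h <;> simp [h₁, h₂, pw]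
    _ ≤ ∑ k, pw (x k) (xh k) :=
        sum_le_sum_of_subset_of_nonneg (filter_subset _ _) fun _ _ _ => pw_nonneg _ _

lemma wc_eq_zero_of_forall_ne (h : ∀ k, xh k ≠ 0 ∧ xh k ≠ 3) : wc x xh = 0 := by
  rw [wc, card_eq_zero, filter_eq_empty_iff]
  rintro k - (hk | hk)
  · exact (h k).2 (Prod.mk.inj hk).2
  · exact (h k).1 (Prod.mk.inj hk).2

lemma aX_nonneg : 0 ≤ aX x xh := Real.sqrt_nonneg _

lemma aB_nonneg : 0 ≤ aB x xh :=
  div_nonneg (add_nonneg (betaW_nonneg x xh) (by positivity)) (Real.sqrt_nonneg _)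

lemma aX_eq_sqrt_betaW_of_wc_eq_zero (h : wc x xh = 0) : aX x xh = √(betaW x xh) := by
  simp [aX, h]

lemma sqrt_betaW_le_aB (h : 0 < betaW x xh) : √(betaW x xh) ≤ aB x xh := by
  rw [aB, le_div_iff₀ (Real.sqrt_pos.mpr h), Real.mul_self_sqrt h.le]
  linarith [(wc x xh).cast_nonneg (α := ℝ)]

lemma aB_le_aX (h : 0 < betaW x xh) : aB x xh ≤ aX x xh := by
  have hw : (0 : ℝ) ≤ wc x xh := Nat.cast_nonneg _
  have hwβ := wc_le_betaW x xh
  rw [aB, aX, div_le_iff₀ (Real.sqrt_pos.mpr h), ← Real.sqrt_mul (by linarith)]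
  exact Real.le_sqrt_of_sq_le (by nlinarith)

end Weights

def labelWeight (d : ZMod 2 × ZMod 2) : ℝ :=
  if d = 0 then 0 else if d = (1, 1) then 4 else 1

/-- Equivalently, since `L` is a bijection, symbols at distance `1` or `3` have labels differing in
exactly one bit. -/
def IsGrayLabeling (L : Fin 4 ≃ (ZMod 2 × ZMod 2)) : Prop :=
  ∀ a c, ((L.symm a : ℤ) - (L.symm c : ℤ)).natAbs = 2 ↔ a - c = (1, 1)

lemma isGrayLabeling_GC1 : IsGrayLabeling GC1 := by
  unfold IsGrayLabeling; decide
lemma isGrayLabeling_GC2 : IsGrayLabeling GC2 := by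
  unfold IsGrayLabeling; decide
lemma isGrayLabeling_GC3 : IsGrayLabeling GC3 := by
  unfold IsGrayLabeling; decide
lemma isGrayLabeling_GC4 : IsGrayLabeling GC4 := by
  unfold IsGrayLabeling; decide

lemma xb_injective {N : ℕ} (L : Fin 4 ≃ (ZMod 2 × ZMod 2)) :
    Function.Injective (xb (N := N) L) :=
  fun _ _ h => funext fun k => L.symm.injective (congrFun h k)

section GrayLabeling

variable {L : Fin 4 ≃ (ZMod 2 × ZMod 2)} {N : ℕ}

lemma IsGrayLabeling.pw_symm (hL : IsGrayLabeling L) (a c : ZMod 2 × ZMod 2) :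
    pw (L.symm a) (L.symm c) = labelWeight (a - c) :=
  if_congr (L.symm.injective.eq_iff.trans sub_eq_zero.symm) rfl (if_congr (hL a c) rfl rfl)

lemma IsGrayLabeling.betaW_xb_eq (hL : IsGrayLabeling L) {b bh b' bh' : Fin N → ZMod 2 × ZMod 2}
    (h : b - bh = b' - bh') : betaW (xb L b) (xb L bh) = betaW (xb L b') (xb L bh') := by
  simp only [betaW, xb, hL.pw_symm, ← Pi.sub_apply, h]

lemma IsGrayLabeling.aX_translate_le_aB (hL : IsGrayLabeling L) {b₀ b bh : Fin N → ZMod 2 × ZMod 2}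
    (hb₀ : ∀ k, L.symm (b₀ k) ≠ 0 ∧ L.symm (b₀ k) ≠ 3) (hne : b ≠ bh) :
    aX (xb L (b₀ + (b - bh))) (xb L b₀) ≤ aB (xb L b) (xb L bh) := by
  have hβ : betaW (xb L (b₀ + (b - bh))) (xb L b₀) = betaW (xb L b) (xb L bh) :=
    hL.betaW_xb_eq (add_sub_cancel_left b₀ (b - bh))
  rw [aX_eq_sqrt_betaW_of_wc_eq_zero _ _ (wc_eq_zero_of_forall_ne _ (xb L b₀) hb₀), hβ]
  exact sqrt_betaW_le_aB _ _ (betaW_pos_of_ne _ _ ((xb_injective L).ne hne))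

end GrayLabeling

noncomputable def minDist {N : ℕ} (d : (Fin N → Fin 4) → (Fin N → Fin 4) → ℝ)
    (L : Fin 4 ≃ (ZMod 2 × ZMod 2)) (B : Submodule (ZMod 2) (Fin N → ZMod 2 × ZMod 2)) : ℝ :=
  sInf {r : ℝ | ∃ b ∈ B, ∃ bh ∈ B, b ≠ bh ∧ r = d (xb L b) (xb L bh)}

section MinDist

variable {N : ℕ} {d : (Fin N → Fin 4) → (Fin N → Fin 4) → ℝ} {L : Fin 4 ≃ (ZMod 2 × ZMod 2)}
  {B : Submodule (ZMod 2) (Fin N → ZMod 2 × ZMod 2)}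

lemma minDist_le (hd : ∀ x xh, 0 ≤ d x xh) {b bh : Fin N → ZMod 2 × ZMod 2} (hb : b ∈ B)
    (hbh : bh ∈ B) (hne : b ≠ bh) : minDist d L B ≤ d (xb L b) (xb L bh) :=
  csInf_le ⟨0, by rintro _ ⟨_, -, _, -, -, rfl⟩; exact hd _ _⟩ ⟨b, hb, bh, hbh, hne, rfl⟩

lemma le_minDist (hB : (B : Set (Fin N → ZMod 2 × ZMod 2)).Nontrivial) {r : ℝ}
    (h : ∀ b ∈ B, ∀ bh ∈ B, b ≠ bh → r ≤ d (xb L b) (xb L bh)) : r ≤ minDist d L B := by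
  obtain ⟨u, hu, v, hv, huv⟩ := hB
  refine le_csInf ⟨_, u, hu, v, hv, huv, rfl⟩ ?_
  rintro _ ⟨b, hb, bh, hbh, hne, rfl⟩
  exact h b hb bh hbh hne

theorem IsGrayLabeling.minDist_aX_eq_minDist_aB (hL : IsGrayLabeling L)
    (hB : (B : Set (Fin N → ZMod 2 × ZMod 2)).Nontrivial) {b₀ : Fin N → ZMod 2 × ZMod 2}
    (hb₀B : b₀ ∈ B) (hb₀ : ∀ k, L.symm (b₀ k) ≠ 0 ∧ L.symm (b₀ k) ≠ 3) :
    minDist aX L B = minDist aB L B := by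
  refine le_antisymm (le_minDist hB fun b hb bh hbh hne => ?_)
    (le_minDist hB fun b hb bh hbh hne => ?_)
  · have htranslate_ne : b₀ + (b - bh) ≠ b₀ := by simpa [sub_eq_zero] using hne
    exact (minDist_le aX_nonneg (B.add_mem hb₀B (B.sub_mem hb hbh)) hb₀B htranslate_ne).trans
      (hL.aX_translate_le_aB hb₀ hne)
  · exact (minDist_le aB_nonneg hb hbh hne).trans
      (aB_le_aX _ _ (betaW_pos_of_ne _ _ ((xb_injective L).ne hne)))

end MinDist

lemma GC1_symm_ne_corner {s : ZMod 2 × ZMod 2} (hs : s.2 = 1) :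
    GC1.symm s ≠ 0 ∧ GC1.symm s ≠ 3 := by
  revert s; decide

lemma GC2_symm_ne_corner {s : ZMod 2 × ZMod 2} (hs : s.1 = 1) :
    GC2.symm s ≠ 0 ∧ GC2.symm s ≠ 3 := by
  revert s; decide

lemma GC3_symm_zero : GC3.symm 0 = 1 := by decide

lemma GC4_symm_zero : GC4.symm 0 = 1 := by decide

theorem loss_zero_any_gray_general (N : ℕ)
    (L : Fin 4 ≃ (ZMod 2 × ZMod 2)) (hL : L = GC1 ∨ L = GC2 ∨ L = GC3 ∨ L = GC4)
    (B : Submodule (ZMod 2) (Fin N → ZMod 2 × ZMod 2))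
    (hB : (B : Set (Fin N → ZMod 2 × ZMod 2)).Nontrivial)
    (b'' b''' : Fin N → ZMod 2 × ZMod 2) (hb'' : b'' ∈ B) (hb''' : b''' ∈ B)
    (hall1 : ∀ k, (b'' k).1 = 1) (hall2 : ∀ k, (b''' k).2 = 1) :
    sInf {r : ℝ | ∃ b ∈ B, ∃ bh ∈ B, b ≠ bh ∧ r = aX (xb L b) (xb L bh)}
      = sInf {r : ℝ | ∃ b ∈ B, ∃ bh ∈ B, b ≠ bh ∧ r = aB (xb L b) (xb L bh)} := by
  rcases hL with rfl | rfl | rfl | rfl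
  · exact isGrayLabeling_GC1.minDist_aX_eq_minDist_aB hB hb'''
      fun k => GC1_symm_ne_corner (hall2 k)
  · exact isGrayLabeling_GC2.minDist_aX_eq_minDist_aB hB hb''
      fun k => GC2_symm_ne_corner (hall1 k)
  · exact isGrayLabeling_GC3.minDist_aX_eq_minDist_aB hB B.zero_mem
      fun _ => by simp [GC3_symm_zero]
  · exact isGrayLabeling_GC4.minDist_aX_eq_minDist_aB hB B.zero_mem
      fun _ => by simp [GC4_symm_zero]

/-- **Corollary: sufficient conditions for zero loss.** For 4-PAM
with any of the four Gray labelings, the asymptotic loss `L(B)` is zero for any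
linear code `B` (with at least two codewords) that contains codewords `b''` and
`b'''` whose first (resp. second) bit is `1` in every position. -/
theorem loss_zero_any_gray (N : ℕ) (hN : 1 ≤ N)
    (L : Fin 4 ≃ (ZMod 2 × ZMod 2)) (hL : L = GC1 ∨ L = GC2 ∨ L = GC3 ∨ L = GC4)
    (B : Submodule (ZMod 2) (Fin N → ZMod 2 × ZMod 2))
    (hB : (B : Set (Fin N → ZMod 2 × ZMod 2)).Nontrivial)
    (b'' b''' : Fin N → ZMod 2 × ZMod 2) (hb'' : b'' ∈ B) (hb''' : b''' ∈ B)
    (hall1 : ∀ k, (b'' k).1 = 1) (hall2 : ∀ k, (b''' k).2 = 1) :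
    sInf {r : ℝ | ∃ b ∈ B, ∃ bh ∈ B, b ≠ bh ∧ r = aX (xb L b) (xb L bh)}
      = sInf {r : ℝ | ∃ b ∈ B, ∃ bh ∈ B, b ≠ bh ∧ r = aB (xb L b) (xb L bh)} :=
  loss_zero_any_gray_general N L hL B hB b'' b''' hb'' hb''' hall1 hall2
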